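/- If source trace s is related to target trace t by the trace relation, and every action in s has taint S, then every action of t that is not matched by an action of s (i.e., every action of t beyond the subsequence corresponding to s) has taint S; in particular, if all actions of s are safe then all actions of t are safe. -/

import Mathlib

/-- Taints: S (safe) and U (unsafe). -/
inductive Taint | S | U
deriving DecidableEq

/-- Actions: regular actions, `if v` actions, and rollback. -/
inductive Act | reg (n : ℕ) | iff (v : ℕ) | rlb
deriving DecidableEq

/-- A tainted action. -/
abbrev TAct := Act × Taint

/-- A trace is a finite list of tainted actions. -/
abbrev Trace := List TAct

/-- The cross-language trace relation: the target trace consists of the source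
trace interleaved with additional `S`-tainted actions; matched actions must be
identical (same action and same taint). -/
inductive TRel : Trace → Trace → Prop
  | nil : TRel [] []
  | same (s t : Trace) (a : TAct) : TRel s t → TRel (s ++ [a]) (t ++ [a])
  | safe (s t : Trace) (a : TAct) : TRel s t → a.2 = Taint.S → TRel s (t ++ [a])

theorem TRel.mem_or_safe {s t : Trace} (h : TRel s t) {a : TAct} (ha : a ∈ t) :
    a ∈ s ∨ a.2 = Taint.S := by
  induction h with
  | nil => simp at ha
  | same s t b _ ih =>
    rcases List.mem_append.1 ha with ha | ha
    · exact (ih ha).imp_left (List.mem_append_left [b])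
    · exact .inl (List.mem_append_right s ha)
  | safe s t b _ hb ih =>
    rcases List.mem_append.1 ha with ha | ha
    · exact ih ha
    · exact .inr (List.eq_of_mem_singleton ha ▸ hb)

/-- If a source trace is related to a target trace and all its actions are
tainted `S`, then all actions of the target trace are tainted `S`. -/
theorem trel_safe_target (s t : Trace) (h : TRel s t)
    (hs : ∀ a ∈ s, a.2 = Taint.S) :
    ∀ a ∈ t, a.2 = Taint.S :=
  fun _ ha => (h.mem_or_safe ha).elim (hs _) id
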